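/- (LEMMA ODD) For every n ≥ 2: (i) for every k with 1 ≤ k ≤ L_{2n−2} − 1, one has T(L_{2n+1} + k) = 1 − T(L_{2n−1} + k) and T(L_{2n+1} + L_{2n−1} + k) = 1 − T(L_{2n−1} + k); (ii) for every k with 0 ≤ k ≤ L_{2n−3}, one has T(L_{2n+1} + L_{2n−2} + k) = T(L_{2n−2} + k). Consequently the word T(Λ_{2n+1}) equals the concatenation of the bitwise complement of T(Λ_{2n−1}), the word T(Λ_{2n−2}), and the bitwise complement of T(Λ_{2n−1}). -/
import Mathlib


/-- The golden mean φ = (1+√5)/2. -/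
noncomputable def phi : ℝ := (1 + Real.sqrt 5) / 2

/-- `d : ℤ → ℕ` is a base-phi expansion of `N`: finitely supported, digits at most 1,
no two consecutive digits equal 1, and `∑ d i * φ^i = N`. -/
def IsBasePhi (N : ℕ) (d : ℤ → ℕ) : Prop :=
  {i : ℤ | d i ≠ 0}.Finite ∧ (∀ i, d i ≤ 1) ∧ (∀ i, d i * d (i + 1) = 0) ∧
    ∑' i : ℤ, (d i : ℝ) * phi ^ i = (N : ℝ)

/-- The Lucas numbers: L 0 = 2, L 1 = 1, L (n+2) = L (n+1) + L n. -/
def Lucas : ℕ → ℕ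
  | 0 => 2
  | 1 => 1
  | n + 2 => Lucas (n + 1) + Lucas n

/-- The sum of the digits of a (finitely supported) digit function. -/
noncomputable def digitSum (d : ℤ → ℕ) : ℕ := ∑' i : ℤ, d i

/-- The word `T(K) T(K+1) … T(M)` of values of `T` on the interval `[a, b]`. -/
def Tword (T : ℕ → ℕ) (a b : ℕ) : List ℕ := (List.range (b + 1 - a)).map fun j => T (a + j)

section Aux

lemma phi_pos : 0 < phi := by
  unfold phi; have : 0 ≤ Real.sqrt 5 := Real.sqrt_nonneg 5; linarith
lemma phi_ne_zero : phi ≠ 0 := ne_of_gt phi_pos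
lemma phi_sq : phi ^ 2 = phi + 1 := by
  unfold phi
  have h5 : Real.sqrt 5 ^ 2 = 5 := Real.sq_sqrt (by norm_num)
  ring_nf; nlinarith [h5]
lemma phi_zrec (a : ℤ) : phi ^ a = phi ^ (a - 1) + phi ^ (a - 2) := by
  have h : phi ^ a = phi ^ (a - 2) * phi ^ 2 := by
    rw [← zpow_natCast phi 2, ← zpow_add₀ phi_ne_zero]; norm_num
  rw [h, phi_sq]
  have : phi ^ (a-1) = phi ^ (a-2) * phi := by
    rw [← zpow_add_one₀ phi_ne_zero]; ring_nf
  rw [this]; ring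
lemma phi_split (a b c : ℤ) (h1 : b = a - 1) (h2 : c = a - 2) : phi ^ a = phi ^ b + phi ^ c := by
  subst h1; subst h2; exact phi_zrec a

def good (S : Finset ℤ) : Prop := ∀ i ∈ S, i + 1 ∉ S
noncomputable def sval (S : Finset ℤ) : ℝ := ∑ i ∈ S, phi ^ i
def bnd (lo hi : ℤ) (S : Finset ℤ) : Prop := ∀ i ∈ S, lo ≤ i ∧ i ≤ hi

lemma good_empty : good (∅ : Finset ℤ) := by intro i hi; simp at hi
lemma sval_empty : sval (∅ : Finset ℤ) = 0 := rfl
lemma bnd_empty (lo hi : ℤ) : bnd lo hi ∅ := by intro i hi; simp at hi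

lemma step (S0 : Finset ℤ) (lo hi a : ℤ) (hg : good S0) (hb : bnd lo hi S0)
    (ha : a + 1 < lo ∨ hi + 1 < a) :
    good (insert a S0) ∧ bnd (min a lo) (max a hi) (insert a S0) ∧
      sval (insert a S0) = phi ^ a + sval S0 ∧ (insert a S0).card = S0.card + 1 := by
  have hmem : ∀ b : ℤ, (b = a - 1 ∨ b = a ∨ b = a + 1) → b ∉ S0 := by
    intro b hbe hbm
    have := hb b hbm
    omega
  have hnot : a ∉ S0 := hmem a (by omega)
  refine ⟨?_, ?_, Finset.sum_insert hnot, Finset.card_insert_of_notMem hnot⟩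
  · intro i hi
    simp only [Finset.mem_insert] at hi ⊢
    push_neg
    rcases hi with rfl | hi
    · exact ⟨by omega, hmem _ (by omega)⟩
    · refine ⟨?_, hg i hi⟩
      rintro rfl
      exact hmem i (by omega) hi
  · intro i hi
    simp only [Finset.mem_insert] at hi
    rcases hi with rfl | hi
    · omega
    · have := hb i hi; omega

lemma lucas_real : ∀ m : ℕ, (Lucas m : ℝ) = phi ^ (m : ℤ) + (-1)^m * phi ^ (-(m : ℤ)) := by
  have key : ∀ m : ℕ, ((Lucas m : ℝ) = phi ^ (m : ℤ) + (-1)^m * phi ^ (-(m : ℤ))) ∧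
      ((Lucas (m+1) : ℝ) = phi ^ ((m+1 : ℕ) : ℤ) + (-1)^(m+1) * phi ^ (-((m+1 : ℕ) : ℤ))) := by
    intro m
    induction m with
    | zero =>
      constructor
      · norm_num [Lucas]
      · show (Lucas 1 : ℝ) = _
        have h1 : phi ^ (1:ℤ) = phi := zpow_one phi
        have h2 : phi ^ (-1:ℤ) = phi⁻¹ := zpow_neg_one phi
        have hinv : phi⁻¹ = phi - 1 := by
          have hm : phi * (phi - 1) = 1 := by nlinarith [phi_sq]
          exact inv_eq_of_mul_eq_one_right hm
        norm_num [Lucas, h1, h2, hinv]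
    | succ k ih =>
      refine ⟨ih.2, ?_⟩
      have hrec : (Lucas (k+2) : ℝ) = (Lucas (k+1) : ℝ) + (Lucas k : ℝ) := by
        rw [Lucas]; push_cast; ring
      rw [hrec, ih.1, ih.2]
      have e1 : phi ^ ((k+2:ℕ) : ℤ) = phi ^ ((k+1:ℕ) : ℤ) + phi ^ ((k:ℕ) : ℤ) :=
        phi_split _ _ _ (by push_cast; ring) (by push_cast; ring)
      have e2 : phi ^ (-((k:ℕ) : ℤ)) = phi ^ (-((k+1:ℕ) : ℤ)) + phi ^ (-((k+2:ℕ) : ℤ)) :=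
        phi_split _ _ _ (by push_cast; ring) (by push_cast; ring)
      rw [e1]
      have h1 : ((-1:ℝ))^(k+2) = (-1)^k := by ring
      have h2 : ((-1:ℝ))^(k+1) = -((-1:ℝ))^k := by ring
      rw [h1, h2, e2]
      ring
  exact fun m => (key m).1

lemma lucas_even' (j : ℕ) (a : ℤ) (ha : a = 2*j) : (Lucas (2*j) : ℝ) = phi ^ a + phi ^ (-a) := by
  subst ha
  rw [lucas_real (2*j)]
  have h1 : ((-1:ℝ))^(2*j) = 1 := by rw [pow_mul]; norm_num
  rw [h1, one_mul]
  have h2 : ((2*j:ℕ):ℤ) = 2*(j:ℤ) := by push_cast; ring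
  rw [h2]

lemma lucas_odd' (j : ℕ) (a : ℤ) (ha : a = 2*j+1) : (Lucas (2*j+1) : ℝ) = phi ^ a - phi ^ (-a) := by
  subst ha
  rw [lucas_real (2*j+1)]
  have h1 : ((-1:ℝ))^(2*j+1) = -1 := by rw [pow_succ, pow_mul]; norm_num
  have h2 : ((2*j+1:ℕ):ℤ) = 2*(j:ℤ)+1 := by push_cast; ring
  rw [h1, h2]
  ring

lemma lucas_pos : ∀ m, 0 < Lucas m := by
  have h : ∀ m, 0 < Lucas m ∧ 0 < Lucas (m+1) := by
    intro m
    induction m with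
    | zero => exact ⟨by norm_num [Lucas], by norm_num [Lucas]⟩
    | succ k ih => exact ⟨ih.2, by rw [show k+1+1 = k+2 from rfl, Lucas]; omega⟩
  exact fun m => (h m).1

lemma lucas_rec (a : ℕ) : Lucas (a+2) = Lucas (a+1) + Lucas a := by rw [Lucas]

theorem key : ∀ n : ℕ,
    (∀ k : ℕ, k ≤ Lucas (2*n+1) → ∃ S : Finset ℤ, good S ∧ bnd (-(2*(n:ℤ))) (2*(n:ℤ)) S ∧
      sval S = k) ∧
    (∀ k : ℕ, 1 ≤ k → k < Lucas (2*n) → ∃ S : Finset ℤ, good S ∧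
      bnd (1-2*(n:ℤ)) (2*(n:ℤ)-1) S ∧ sval S = (k:ℝ) - phi ^ (-(2*(n:ℤ)))) := by
  intro n
  induction n using Nat.strong_induction_on with
  | _ n ih =>
    match n with
    | 0 =>
      constructor
      · intro k hk
        rw [show Lucas (2*0+1) = 1 from rfl] at hk
        interval_cases k
        · exact ⟨∅, good_empty, bnd_empty _ _, by simp [sval_empty]⟩
        · refine ⟨{0}, ?_, ?_, ?_⟩
          · intro i hi; simp at hi; subst hi; simp
          · intro i hi; simp at hi; omega
          · simp [sval]
      · intro k hk1 hk2
        rw [show Lucas (2*0) = 2 from rfl] at hk2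
        interval_cases k
        refine ⟨∅, good_empty, bnd_empty _ _, ?_⟩
        simp [sval_empty]
    | m + 1 =>
      obtain ⟨Pm, Qm⟩ := ih m (by omega)
      have hc1 : ((m+1:ℕ):ℤ) = (m:ℤ)+1 := by push_cast; ring
      have hLodd : Lucas (2*(m+1)+1) = Lucas (2*(m+1)) + Lucas (2*m+1) := by
        rw [show 2*(m+1)+1 = (2*m+1)+2 from by omega, lucas_rec,
          show 2*m+1+1 = 2*(m+1) from by omega]
      have hLev : Lucas (2*(m+1)) = Lucas (2*m+1) + Lucas (2*m) := by
        rw [show 2*(m+1) = (2*m)+2 from by omega, lucas_rec]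
      constructor
      · -- P (m+1)
        intro k hk
        rw [hc1]
        by_cases h1 : k ≤ Lucas (2*m+1)
        · obtain ⟨S, hg, hb, hv⟩ := Pm k h1
          exact ⟨S, hg, fun i hi => by have := hb i hi; omega, hv⟩
        · by_cases h2 : k < Lucas (2*(m+1))
          · -- k = L(2m+1)+j, 1 ≤ j < L(2m) : S = {2m+1, -(2m+2)} ∪ Q-set
            set j := k - Lucas (2*m+1) with hj
            have hj1 : 1 ≤ j := by omega
            have hj2 : j < Lucas (2*m) := by omega
            obtain ⟨S, hg, hb, hv⟩ := Qm j hj1 hj2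
            obtain ⟨hg1, hb1, hv1, _⟩ := step S _ _ (-(2*(m:ℤ)+2)) hg hb (by omega)
            obtain ⟨hg2, hb2, hv2, _⟩ := step _ _ _ (2*(m:ℤ)+1) hg1 hb1 (by
              right; rw [max_def]; split <;> omega)
            refine ⟨_, hg2, fun i hi => by have := hb2 i hi; omega, ?_⟩
            rw [hv2, hv1, hv]
            have hkj : (k:ℝ) = (Lucas (2*m+1) : ℝ) + (j:ℝ) := by
              have : k = Lucas (2*m+1) + j := by omega
              rw [this]; push_cast; ring
            rw [hkj, lucas_odd' m (2*(m:ℤ)+1) rfl]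
            have hs := phi_split (-(2*(m:ℤ))) (-(2*(m:ℤ)+1)) (-(2*(m:ℤ)+2)) (by ring) (by ring)
            linarith
          · -- k = L(2m+2)+j, j ≤ L(2m+1) : S = {2m+2, -(2m+2)} ∪ P-set
            set j := k - Lucas (2*(m+1)) with hj
            have hj1 : j ≤ Lucas (2*m+1) := by omega
            obtain ⟨S, hg, hb, hv⟩ := Pm j hj1
            obtain ⟨hg1, hb1, hv1, _⟩ := step S _ _ (-(2*(m:ℤ)+2)) hg hb (by omega)
            obtain ⟨hg2, hb2, hv2, _⟩ := step _ _ _ (2*(m:ℤ)+2) hg1 hb1 (by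
              right; rw [max_def]; split <;> omega)
            refine ⟨_, hg2, fun i hi => by have := hb2 i hi; omega, ?_⟩
            rw [hv2, hv1, hv]
            have hkj : (k:ℝ) = (Lucas (2*(m+1)) : ℝ) + (j:ℝ) := by
              have : k = Lucas (2*(m+1)) + j := by omega
              rw [this]; push_cast; ring
            rw [hkj, show (2*(m+1)) = 2*(m+1) from rfl,
              lucas_even' (m+1) (2*(m:ℤ)+2) (by push_cast; ring)]
            linarith
      · -- Q (m+1)
        intro k hk1 hk2
        rw [hc1]
        by_cases h1 : k < Lucas (2*m)
        · -- S = {-(2m+1)} ∪ Q-set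
          obtain ⟨S, hg, hb, hv⟩ := Qm k hk1 h1
          obtain ⟨hg1, hb1, hv1, _⟩ := step S _ _ (-(2*(m:ℤ)+1)) hg hb (by omega)
          refine ⟨_, hg1, fun i hi => by have := hb1 i hi; omega, ?_⟩
          rw [hv1, hv]
          have hs := phi_split (-(2*(m:ℤ))) (-(2*(m:ℤ)+1)) (-(2*((m:ℤ)+1))) (by ring) (by ring)
          linarith
        · by_cases h2 : k ≤ Lucas (2*m+1)
          · -- k = L(2m)+j, j ≤ L(2m-1) : uses P (m-1); m = 0 impossible
            match m, Pm, Qm, hc1, h1, h2, hk2 with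
            | 0, _, _, _, h1, h2, _ =>
              exfalso
              rw [show Lucas (2*0) = 2 from rfl] at h1
              rw [show Lucas (2*0+1) = 1 from rfl] at h2
              omega
            | m'+1, Pm, Qm, hc1, h1, h2, hk2 =>
              obtain ⟨Pm', _⟩ := ih m' (by omega)
              set j := k - Lucas (2*(m'+1)) with hj
              have hLev' : Lucas (2*(m'+1)+1) = Lucas (2*(m'+1)) + Lucas (2*m'+1) := by
                rw [show 2*(m'+1)+1 = (2*m'+1)+2 from by omega, lucas_rec,
                  show 2*m'+1+1 = 2*(m'+1) from by omega]
              have hj1 : j ≤ Lucas (2*m'+1) := by omega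
              obtain ⟨S, hg, hb, hv⟩ := Pm' j hj1
              obtain ⟨hg1, hb1, hv1, _⟩ := step S _ _ (-(2*((m'+1:ℕ):ℤ)+1)) hg hb (by
                push_cast; omega)
              obtain ⟨hg2, hb2, hv2, _⟩ := step _ _ _ (2*((m'+1:ℕ):ℤ)) hg1 hb1 (by
                right; rw [max_def]; push_cast; split <;> omega)
              refine ⟨_, hg2, fun i hi => by have := hb2 i hi; push_cast at this ⊢; omega, ?_⟩
              rw [hv2, hv1, hv]
              have hkj : (k:ℝ) = (Lucas (2*(m'+1)) : ℝ) + (j:ℝ) := by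
                have : k = Lucas (2*(m'+1)) + j := by omega
                rw [this]; push_cast; ring
              rw [hkj, lucas_even' (m'+1) (2*((m'+1:ℕ):ℤ)) (by push_cast; ring)]
              have hs := phi_split (-(2*((m'+1:ℕ):ℤ))) (-(2*((m'+1:ℕ):ℤ))-1)
                (-(2*(((m'+1:ℕ):ℤ)+1))) (by ring) (by push_cast; ring)
              have hc2 : ((m'+1:ℕ):ℤ) = (m':ℤ)+1 := by push_cast; ring
              rw [hc2] at hs ⊢
              have : -(2*((m':ℤ)+1))-1 = -(2*((m':ℤ)+1)+1) := by ring
              rw [this] at hs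
              linarith
          · -- k = L(2m+1)+j, 1 ≤ j < L(2m) : S = {2m+1} ∪ Q-set
            set j := k - Lucas (2*m+1) with hj
            have hj1 : 1 ≤ j := by omega
            have hj2 : j < Lucas (2*m) := by omega
            obtain ⟨S, hg, hb, hv⟩ := Qm j hj1 hj2
            obtain ⟨hg1, hb1, hv1, _⟩ := step S _ _ (2*(m:ℤ)+1) hg hb (by omega)
            refine ⟨_, hg1, fun i hi => by have := hb1 i hi; omega, ?_⟩
            rw [hv1, hv]
            have hkj : (k:ℝ) = (Lucas (2*m+1) : ℝ) + (j:ℝ) := by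
              have : k = Lucas (2*m+1) + j := by omega
              rw [this]; push_cast; ring
            rw [hkj, lucas_odd' m (2*(m:ℤ)+1) rfl]
            have hs := phi_split (-(2*(m:ℤ))) (-(2*(m:ℤ)+1)) (-(2*((m:ℤ)+1))) (by ring) (by ring)
            linarith

def ind (S : Finset ℤ) : ℤ → ℕ := fun i => if i ∈ S then 1 else 0

lemma isBasePhi_ind (S : Finset ℤ) (N : ℕ) (hg : good S) (hv : sval S = N) :
    IsBasePhi N (ind S) := by
  refine ⟨?_, ?_, ?_, ?_⟩
  · apply Set.Finite.subset S.finite_toSet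
    intro i hi
    simp only [ind, Set.mem_setOf_eq] at hi
    simp only [Finset.mem_coe]
    by_contra h
    simp [h] at hi
  · intro i; unfold ind; split <;> simp
  · intro i; unfold ind
    by_cases h : i ∈ S
    · have := hg i h; simp [h, this]
    · simp [h]
  · rw [tsum_eq_sum (s := S) (f := fun i => (ind S i : ℝ) * phi ^ i)]
    · rw [← hv]; unfold sval
      apply Finset.sum_congr rfl
      intro i hi; simp [ind, hi]
    · intro b hb; simp [ind, hb]

lemma digitSum_ind (S : Finset ℤ) : digitSum (ind S) = S.card := by
  unfold digitSum
  rw [tsum_eq_sum (s := S) (f := fun i => ind S i)]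
  · rw [Finset.card_eq_sum_ones]
    apply Finset.sum_congr rfl
    intro i hi; simp [ind, hi]
  · intro b hb; simp [ind, hb]

lemma sval_insert (a : ℤ) (S : Finset ℤ) (h : a ∉ S) :
    sval (insert a S) = phi ^ a + sval S := Finset.sum_insert h

lemma good_insert (a : ℤ) (S : Finset ℤ) (h : good S) (h1 : a + 1 ∉ S) (h2 : a - 1 ∉ S) :
    good (insert a S) := by
  intro i hi
  simp only [Finset.mem_insert] at hi ⊢
  push_neg
  rcases hi with rfl | hi
  · exact ⟨by omega, h1⟩
  · constructor
    · rintro rfl; exact h2 (by simpa using hi)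
    · exact h i hi

lemma T_eq (T : ℕ → ℕ)
    (hT : ∀ (N : ℕ) (d : ℤ → ℕ), IsBasePhi N d → T N = digitSum d % 2)
    (N : ℕ) (S : Finset ℤ) (hg : good S) (hv : sval S = N) : T N = S.card % 2 := by
  rw [hT N (ind S) (isBasePhi_ind S N hg hv), digitSum_ind]

end Aux

/-- LEMMA ODD: for `n ≥ 2`, (i) for `1 ≤ k ≤ L (2n-2) - 1` one has
`T (L (2n+1) + k) = 1 - T (L (2n-1) + k)` and
`T (L (2n+1) + L (2n-1) + k) = 1 - T (L (2n-1) + k)`;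
(ii) for `0 ≤ k ≤ L (2n-3)` one has `T (L (2n+1) + L (2n-2) + k) = T (L (2n-2) + k)`.
Consequently `T(Λ_{2n+1})` is the concatenation of the complement of `T(Λ_{2n-1})`,
the word `T(Λ_{2n-2})`, and the complement of `T(Λ_{2n-1})`. -/
theorem lemma_odd (T : ℕ → ℕ)
    (hT : ∀ (N : ℕ) (d : ℤ → ℕ), IsBasePhi N d → T N = digitSum d % 2)
    (n : ℕ) (hn : 2 ≤ n) :
    (∀ k : ℕ, 1 ≤ k → k ≤ Lucas (2 * n - 2) - 1 →
      T (Lucas (2 * n + 1) + k) = 1 - T (Lucas (2 * n - 1) + k) ∧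
      T (Lucas (2 * n + 1) + Lucas (2 * n - 1) + k) = 1 - T (Lucas (2 * n - 1) + k)) ∧
    (∀ k : ℕ, k ≤ Lucas (2 * n - 3) →
      T (Lucas (2 * n + 1) + Lucas (2 * n - 2) + k) = T (Lucas (2 * n - 2) + k)) ∧
    Tword T (Lucas (2 * n + 1) + 1) (Lucas (2 * n + 2) - 1) =
      (Tword T (Lucas (2 * n - 1) + 1) (Lucas (2 * n) - 1)).map (fun x => 1 - x) ++
        Tword T (Lucas (2 * n - 2)) (Lucas (2 * n - 1)) ++
        (Tword T (Lucas (2 * n - 1) + 1) (Lucas (2 * n) - 1)).map (fun x => 1 - x) := by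
  obtain ⟨m, rfl⟩ : ∃ m, n = m + 2 := ⟨n - 2, by omega⟩
  simp only [show 2*(m+2) = 2*m+4 from by omega, show 2*m+4+1 = 2*m+5 from by omega,
    show 2*m+4-1 = 2*m+3 from by omega, show 2*m+4-2 = 2*m+2 from by omega,
    show 2*m+4-3 = 2*m+1 from by omega, show 2*m+4+2 = 2*m+6 from by omega]
  set x : ℤ := (m : ℤ) with hx
  -- cast normalizations for key applications
  have e1 : (2*((m+1:ℕ):ℤ)) = 2*x+2 := by push_cast; ring
  have e2 : (1-2*((m+1:ℕ):ℤ)) = -(2*x+1) := by push_cast; ring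
  have e3 : (2*((m+1:ℕ):ℤ)-1) = 2*x+1 := by push_cast; ring
  -- real values of Lucas numbers
  have hL1 : (Lucas (2*m+1) : ℝ) = phi^(2*x+1) - phi^(-(2*x+1)) := by
    rw [show 2*m+1 = 2*m+1 from rfl]; exact lucas_odd' m (2*x+1) (by push_cast; ring)
  have hL2 : (Lucas (2*m+2) : ℝ) = phi^(2*x+2) + phi^(-(2*x+2)) := by
    rw [show 2*m+2 = 2*(m+1) from by omega]
    exact lucas_even' (m+1) (2*x+2) (by push_cast; ring)
  have hL3 : (Lucas (2*m+3) : ℝ) = phi^(2*x+3) - phi^(-(2*x+3)) := by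
    rw [show 2*m+3 = 2*(m+1)+1 from by omega]
    exact lucas_odd' (m+1) (2*x+3) (by push_cast; ring)
  have hL5 : (Lucas (2*m+5) : ℝ) = phi^(2*x+5) - phi^(-(2*x+5)) := by
    rw [show 2*m+5 = 2*(m+2)+1 from by omega]
    exact lucas_odd' (m+2) (2*x+5) (by push_cast; ring)
  -- the splitting identities
  have s1 : phi ^ (-(2*x+2)) = phi ^ (-(2*x+3)) + phi ^ (-(2*x+4)) :=
    phi_split _ _ _ (by ring) (by ring)
  have s2 : phi ^ (-(2*x+4)) = phi ^ (-(2*x+5)) + phi ^ (-(2*x+6)) :=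
    phi_split _ _ _ (by ring) (by ring)
  -- Part (i)
  have part1 : ∀ k : ℕ, 1 ≤ k → k ≤ Lucas (2*m+2) - 1 →
      T (Lucas (2*m+5) + k) = 1 - T (Lucas (2*m+3) + k) ∧
      T (Lucas (2*m+5) + Lucas (2*m+3) + k) = 1 - T (Lucas (2*m+3) + k) := by
    intro k hk1 hk2
    have hk2' : k < Lucas (2*(m+1)) := by
      have := lucas_pos (2*m+2)
      rw [show 2*(m+1) = 2*m+2 from by omega]
      omega
    obtain ⟨M, hg, hb, hv⟩ := (key (m+1)).2 k hk1 hk2'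
    rw [e2, e3] at hb
    rw [e1] at hv
    -- A = L(2m+3) + k : {2x+3, -(2x+4)} ∪ M
    obtain ⟨hgA1, hbA1, hvA1, hcA1⟩ := step M _ _ (-(2*x+4)) hg hb (by omega)
    obtain ⟨hgA2, hbA2, hvA2, hcA2⟩ := step _ _ _ (2*x+3) hgA1 hbA1 (by right; omega)
    have hTA : T (Lucas (2*m+3) + k) = (M.card + 2) % 2 := by
      rw [T_eq T hT _ _ hgA2 ?_, hcA2, hcA1]
      rw [hvA2, hvA1, hv]
      push_cast
      rw [hL3]
      linarith [phi_split (-(2*x+2)) (-(2*x+3)) (-(2*x+4)) (by ring) (by ring)]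
    -- B = L(2m+5) + k : {2x+5, -(2x+6), -(2x+3)} ∪ M
    obtain ⟨hgB1, hbB1, hvB1, hcB1⟩ := step M _ _ (-(2*x+3)) hg hb (by omega)
    obtain ⟨hgB2, hbB2, hvB2, hcB2⟩ := step _ _ _ (-(2*x+6)) hgB1 hbB1 (by left; omega)
    obtain ⟨hgB3, hbB3, hvB3, hcB3⟩ := step _ _ _ (2*x+5) hgB2 hbB2 (by right; omega)
    have hTB : T (Lucas (2*m+5) + k) = (M.card + 3) % 2 := by
      rw [T_eq T hT _ _ hgB3 ?_, hcB3, hcB2, hcB1]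
      rw [hvB3, hvB2, hvB1, hv]
      push_cast
      rw [hL5]
      linarith [s1, s2]
    -- C = L(2m+5) + L(2m+3) + k : {2x+5, 2x+3, -(2x+6)} ∪ M
    obtain ⟨hgC1, hbC1, hvC1, hcC1⟩ := step M _ _ (-(2*x+6)) hg hb (by omega)
    obtain ⟨hgC2, hbC2, hvC2, hcC2⟩ := step _ _ _ (2*x+3) hgC1 hbC1 (by right; omega)
    obtain ⟨hgC3, hbC3, hvC3, hcC3⟩ := step _ _ _ (2*x+5) hgC2 hbC2 (by right; omega)
    have hTC : T (Lucas (2*m+5) + Lucas (2*m+3) + k) = (M.card + 3) % 2 := by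
      rw [T_eq T hT _ _ hgC3 ?_, hcC3, hcC2, hcC1]
      rw [hvC3, hvC2, hvC1, hv]
      push_cast
      rw [hL5, hL3]
      linarith [s1, s2]
    rw [hTA, hTB, hTC]
    constructor <;> omega
  -- Part (ii)
  have part2 : ∀ k : ℕ, k ≤ Lucas (2*m+1) →
      T (Lucas (2*m+5) + Lucas (2*m+2) + k) = T (Lucas (2*m+2) + k) := by
    intro k hk
    obtain ⟨M, hg, hb, hv⟩ := (key m).1 k hk
    -- D = L(2m+2) + k : {2x+2, -(2x+2)} ∪ M
    obtain ⟨hgD1, hbD1, hvD1, hcD1⟩ := step M _ _ (-(2*x+2)) hg hb (by omega)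
    obtain ⟨hgD2, hbD2, hvD2, hcD2⟩ := step _ _ _ (2*x+2) hgD1 hbD1 (by right; omega)
    have hTD : T (Lucas (2*m+2) + k) = (M.card + 2) % 2 := by
      rw [T_eq T hT _ _ hgD2 ?_, hcD2, hcD1]
      rw [hvD2, hvD1, hv]
      push_cast
      rw [hL2]
      ring
    -- E = L(2m+5)+L(2m+2)+k : {2x+5, 2x+2, -(2x+6), -(2x+3)} ∪ M
    obtain ⟨hgE1, hbE1, hvE1, hcE1⟩ := step M _ _ (-(2*x+3)) hg hb (by omega)
    obtain ⟨hgE2, hbE2, hvE2, hcE2⟩ := step _ _ _ (-(2*x+6)) hgE1 hbE1 (by left; omega)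
    obtain ⟨hgE3, hbE3, hvE3, hcE3⟩ := step _ _ _ (2*x+2) hgE2 hbE2 (by right; omega)
    obtain ⟨hgE4, hbE4, hvE4, hcE4⟩ := step _ _ _ (2*x+5) hgE3 hbE3 (by right; omega)
    have hTE : T (Lucas (2*m+5) + Lucas (2*m+2) + k) = (M.card + 4) % 2 := by
      rw [T_eq T hT _ _ hgE4 ?_, hcE4, hcE3, hcE2, hcE1]
      rw [hvE4, hvE3, hvE2, hvE1, hv]
      push_cast
      rw [hL5, hL2]
      linarith [s1, s2]
    rw [hTD, hTE]
    omega
  refine ⟨part1, part2, ?_⟩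
  -- word equality
  have p1 := lucas_pos (2*m+1)
  have p2 := lucas_pos (2*m+2)
  have h3 : Lucas (2*m+3) = Lucas (2*m+2) + Lucas (2*m+1) := by
    rw [show 2*m+3 = (2*m+1)+2 from by omega, lucas_rec, show 2*m+1+1 = 2*m+2 from by omega]
  have h4 : Lucas (2*m+4) = Lucas (2*m+3) + Lucas (2*m+2) := by
    rw [show 2*m+4 = (2*m+2)+2 from by omega, lucas_rec, show 2*m+2+1 = 2*m+3 from by omega]
  have h5 : Lucas (2*m+5) = Lucas (2*m+4) + Lucas (2*m+3) := by
    rw [show 2*m+5 = (2*m+3)+2 from by omega, lucas_rec, show 2*m+3+1 = 2*m+4 from by omega]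
  have h6 : Lucas (2*m+6) = Lucas (2*m+5) + Lucas (2*m+4) := by
    rw [show 2*m+6 = (2*m+4)+2 from by omega, lucas_rec, show 2*m+4+1 = 2*m+5 from by omega]
  have hlen : Lucas (2*m+6) - 1 + 1 - (Lucas (2*m+5)+1)
      = (Lucas (2*m+2)-1) + ((Lucas (2*m+1)+1) + (Lucas (2*m+2)-1)) := by omega
  have hlen1 : Lucas (2*m+4) - 1 + 1 - (Lucas (2*m+3)+1) = Lucas (2*m+2)-1 := by omega
  have hlen2 : Lucas (2*m+3) + 1 - Lucas (2*m+2) = Lucas (2*m+1)+1 := by omega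
  unfold Tword
  rw [hlen, hlen1, hlen2, List.range_add, List.range_add]
  simp only [List.map_append, List.map_map, List.append_assoc]
  congr 1
  · apply List.map_congr_left
    intro j hj
    simp only [List.mem_range] at hj
    simp only [Function.comp_apply]
    have hk := (part1 (j+1) (by omega) (by omega)).1
    rw [show Lucas (2*m+5) + 1 + j = Lucas (2*m+5) + (j+1) from by omega, hk,
      show Lucas (2*m+3) + 1 + j = Lucas (2*m+3) + (j+1) from by omega]
  congr 1
  · apply List.map_congr_left
    intro j hj
    simp only [List.mem_range] at hj
    simp only [Function.comp_apply]
    have hk := part2 j (by omega)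
    rw [show Lucas (2*m+5) + 1 + (Lucas (2*m+2) - 1 + j)
        = Lucas (2*m+5) + Lucas (2*m+2) + j from by omega, hk]
  · apply List.map_congr_left
    intro j hj
    simp only [List.mem_range] at hj
    simp only [Function.comp_apply]
    have hk := (part1 (j+1) (by omega) (by omega)).2
    rw [show Lucas (2*m+5) + 1 + (Lucas (2*m+2) - 1 + (Lucas (2*m+1) + 1 + j))
        = Lucas (2*m+5) + Lucas (2*m+3) + (j+1) from by omega, hk]
    rw [show Lucas (2*m+3) + 1 + j = Lucas (2*m+3) + (j+1) from by omega]
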